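/- arXiv:2301.05742 — 2 statements merged into one kernel-verified Lean document; each statement's English description precedes it below -/
import Mathlib

section
/- There exists a function E from the positive integers to finite binary strings (lists of Booleans) such that: (i) E is injective; (ii) every E(N) is nonempty; (iii) the code is prefix-free, i.e., for all positive integers M ≠ N, E(M) is not a prefix of E(N); and (iv) for every positive integer N the length of E(N) equals 1 + ⌊log₂ N⌋ + 2·⌊log₂(1 + ⌊log₂ N⌋)⌋. (This is the Elias delta code, whose codeword length is ⌊log₂ N⌋ + O(log log N).) -/
/-- Fixed-width big-endian binary representation: `wbits k r` is the
`k`-bit representation of `r` (for `r < 2^k`). -/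
def wbits : ℕ → ℕ → List Bool
  | 0, _ => []
  | k+1, r => decide (2^k ≤ r) :: wbits k (r % 2^k)

lemma wbits_length : ∀ k r, (wbits k r).length = k := by
  intro k
  induction k with
  | zero => intro r; rfl
  | succ k ih => intro r; simp [wbits, ih]

lemma wbits_inj : ∀ k r s, r < 2^k → s < 2^k → wbits k r = wbits k s → r = s := by
  intro k
  induction k with
  | zero => intro r s hr hs _; omega
  | succ k ih =>
    intro r s hr hs h
    simp only [wbits, List.cons.injEq, decide_eq_decide] at h
    obtain ⟨h1, h2⟩ := h
    have hrm : r % 2^k < 2^k := Nat.mod_lt _ (Nat.two_pow_pos k)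
    have hsm : s % 2^k < 2^k := Nat.mod_lt _ (Nat.two_pow_pos k)
    have hmod : r % 2^k = s % 2^k := ih _ _ hrm hsm h2
    have hpow : 2^(k+1) = 2^k * 2 := pow_succ 2 k
    have hrd : r / 2^k < 2 := by
      rw [Nat.div_lt_iff_lt_mul (Nat.two_pow_pos k)]
      omega
    have hsd : s / 2^k < 2 := by
      rw [Nat.div_lt_iff_lt_mul (Nat.two_pow_pos k)]
      omega
    have hr' : 2^k ≤ r ↔ 1 ≤ r / 2^k := by
      rw [Nat.le_div_iff_mul_le (Nat.two_pow_pos k)]; simp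
    have hs' : 2^k ≤ s ↔ 1 ≤ s / 2^k := by
      rw [Nat.le_div_iff_mul_le (Nat.two_pow_pos k)]; simp
    have hdiv : r / 2^k = s / 2^k := by
      by_cases hc : 2^k ≤ r
      · have e1 : 1 ≤ r / 2^k := hr'.mp hc
        have e2 : 1 ≤ s / 2^k := hs'.mp (h1.mp hc)
        omega
      · have h1' : ¬ 2^k ≤ s := fun hs2 => hc (h1.mpr hs2)
        have e1 : r / 2^k = 0 := Nat.div_eq_of_lt (by omega)
        have e2 : s / 2^k = 0 := Nat.div_eq_of_lt (by omega)
        omega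
    rw [← Nat.div_add_mod r (2^k), ← Nat.div_add_mod s (2^k), hdiv, hmod]

/-- If a string of `k1` falses followed by a true-headed tail is a prefix of a
string of `k2` falses followed by a true-headed tail, then `k1 = k2`. -/
lemma prefix_aux : ∀ (k1 k2 : ℕ) (a b : List Bool),
    (List.replicate k1 false ++ true :: a) <+: (List.replicate k2 false ++ true :: b) →
    k1 = k2 ∧ a <+: b := by
  intro k1
  induction k1 with
  | zero =>
    intro k2 a b h
    cases k2 with
    | zero =>
      simp only [List.replicate_zero, List.nil_append, List.cons_prefix_cons] at h
      exact ⟨rfl, h.2⟩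
    | succ k =>
      simp only [List.replicate_zero, List.nil_append, List.replicate_succ,
        List.cons_append, List.cons_prefix_cons] at h
      exact absurd h.1 (by simp)
  | succ k ih =>
    intro k2 a b h
    cases k2 with
    | zero =>
      simp only [List.replicate_zero, List.nil_append, List.replicate_succ,
        List.cons_append, List.cons_prefix_cons] at h
      exact absurd h.1 (by simp)
    | succ k2 =>
      simp only [List.replicate_succ, List.cons_append, List.cons_prefix_cons] at h
      obtain ⟨keq, hpre⟩ := ih k2 a b h.2
      exact ⟨by omega, hpre⟩

lemma prefix_cancel {a b c d : List Bool} (hlen : a.length = b.length)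
    (h : a ++ c <+: b ++ d) : a = b ∧ c <+: d := by
  obtain ⟨r, hr⟩ := h
  have hab : a = b := by
    have h1 : (a ++ (c ++ r)).take a.length = a := List.take_left
    have h2 : (b ++ d).take b.length = b := List.take_left
    rw [← List.append_assoc] at h1
    rw [hr] at h1
    rw [hlen] at h1
    rw [h2] at h1
    exact h1.symm
  subst hab
  rw [List.append_assoc] at hr
  have := List.append_cancel_left hr.symm
  exact ⟨rfl, ⟨r, this.symm⟩⟩

/-- The Elias delta code. -/
def eliasDelta (n : ℕ) : List Bool :=
  List.replicate (Nat.log 2 (Nat.log 2 n + 1)) false ++ true ::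
    (wbits (Nat.log 2 (Nat.log 2 n + 1))
        ((Nat.log 2 n + 1) - 2^(Nat.log 2 (Nat.log 2 n + 1))) ++
     wbits (Nat.log 2 n) (n - 2^(Nat.log 2 n)))

lemma eliasDelta_key {m n : ℕ} (hm : 0 < m) (hn : 0 < n)
    (h : eliasDelta m <+: eliasDelta n) : m = n := by
  set Lm := Nat.log 2 m + 1 with hLm
  set Ln := Nat.log 2 n + 1 with hLn
  set km := Nat.log 2 Lm with hkm
  set kn := Nat.log 2 Ln with hkn
  unfold eliasDelta at h
  rw [← hLm, ← hLn, ← hkm, ← hkn] at h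
  obtain ⟨hk, hpre⟩ := prefix_aux km kn _ _ h
  rw [← hk] at hpre
  have hlen : (wbits km (Lm - 2^km)).length = (wbits km (Ln - 2^km)).length := by
    simp [wbits_length]
  obtain ⟨heq1, hpre2⟩ := prefix_cancel hlen hpre
  -- recover Lm = Ln
  have hLmpos : 0 < Lm := by omega
  have hLnpos : 0 < Ln := by omega
  have h2Lm : 2^km ≤ Lm := Nat.pow_log_le_self 2 (by omega)
  have h2Ln : 2^km ≤ Ln := by
    rw [hk, hkn]; exact Nat.pow_log_le_self 2 (by omega)
  have hLmlt : Lm < 2^(km+1) := Nat.lt_pow_succ_log_self (by norm_num) Lm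
  have hLnlt : Ln < 2^(km+1) := by
    rw [hk, hkn]; exact Nat.lt_pow_succ_log_self (by norm_num) Ln
  have hLeq : Lm = Ln := by
    have := wbits_inj km (Lm - 2^km) (Ln - 2^km)
      (by rw [pow_succ] at hLmlt; omega)
      (by rw [pow_succ] at hLnlt; omega) heq1
    omega
  have hlogeq : Nat.log 2 m = Nat.log 2 n := by omega
  -- second pieces equal
  have hlen2 : (wbits (Nat.log 2 m) (m - 2^(Nat.log 2 m))).length =
      (wbits (Nat.log 2 n) (n - 2^(Nat.log 2 n))).length := by
    simp [wbits_length, hlogeq]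
  have heq2 : wbits (Nat.log 2 m) (m - 2^(Nat.log 2 m)) =
      wbits (Nat.log 2 n) (n - 2^(Nat.log 2 n)) :=
    hpre2.eq_of_length hlen2
  rw [hlogeq] at heq2
  have h2m : 2^(Nat.log 2 m) ≤ m := Nat.pow_log_le_self 2 (by omega)
  have h2n : 2^(Nat.log 2 n) ≤ n := Nat.pow_log_le_self 2 (by omega)
  have hmlt : m < 2^(Nat.log 2 m + 1) := Nat.lt_pow_succ_log_self (by norm_num) m
  have hnlt : n < 2^(Nat.log 2 n + 1) := Nat.lt_pow_succ_log_self (by norm_num) n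
  rw [pow_succ] at hmlt hnlt
  rw [hlogeq] at h2m hmlt
  have := wbits_inj (Nat.log 2 n) (m - 2^(Nat.log 2 n)) (n - 2^(Nat.log 2 n))
    (by omega) (by omega) heq2
  omega

/-- There exists a prefix-free binary code on the positive integers (the Elias
delta code) whose codeword for `N` has length
`1 + ⌊log₂ N⌋ + 2·⌊log₂(1 + ⌊log₂ N⌋)⌋`. -/
theorem elias_delta_exists :
    ∃ E : ℕ → List Bool,
      (∀ M N : ℕ, 0 < M → 0 < N → E M = E N → M = N) ∧
      (∀ N : ℕ, 0 < N → E N ≠ []) ∧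
      (∀ M N : ℕ, 0 < M → 0 < N → M ≠ N → ¬ (E M <+: E N)) ∧
      (∀ N : ℕ, 0 < N →
        (E N).length = 1 + Nat.log 2 N + 2 * Nat.log 2 (1 + Nat.log 2 N)) := by
  refine ⟨eliasDelta, ?_, ?_, ?_, ?_⟩
  · intro M N hM hN h
    exact eliasDelta_key hM hN (h ▸ List.prefix_refl _)
  · intro N _
    simp [eliasDelta]
  · intro M N hM hN hne h
    exact hne (eliasDelta_key hM hN h)
  · intro N _
    simp only [eliasDelta, List.length_append, List.length_replicate,
      List.length_cons, wbits_length]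
    rw [Nat.add_comm 1 (Nat.log 2 N)]
    ring
end

section
/- There exists an absolute constant C > 0 such that for every integer n ≥ 1 there exists a map enc from the set of sequences y = (y₁, …, yₙ) of nonnegative integers to nonempty finite binary strings with the following properties: (i) enc is injective; (ii) enc is prefix-free, i.e., for any two distinct sequences y ≠ y′, enc(y) is not a prefix of enc(y′); and (iii) for every sequence y, writing K := 1 + max{yᵢ : 1 ≤ i ≤ n} and φⱼ := |{i ∈ [n] : yᵢ = j}| for 0 ≤ j ≤ K−1, the length of enc(y) is at most log₂(1 + ⌈ n! / ∏_{j=0}^{K−1} φⱼ! ⌉) + C · K · log₂(n + 1). -/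
open Finset


open Finset

namespace SeqEnc

/-- fixed width binary encoding -/
def toBits (w m : ℕ) : List Bool := (List.range w).map m.testBit

lemma toBits_length (w m : ℕ) : (toBits w m).length = w := by
  simp [toBits]

lemma toBits_inj {w m m' : ℕ} (hm : m < 2 ^ w) (hm' : m' < 2 ^ w)
    (h : toBits w m = toBits w m') : m = m' := by
  apply Nat.eq_of_testBit_eq
  intro i
  by_cases hi : i < w
  · have := (List.map_eq_map_iff).1 h i (List.mem_range.2 hi)
    exact this
  · push_neg at hi
    have h2 : 2 ^ w ≤ 2 ^ i := Nat.pow_le_pow_right (by norm_num) hi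
    rw [Nat.testBit_eq_false_of_lt (lt_of_lt_of_le hm h2),
      Nat.testBit_eq_false_of_lt (lt_of_lt_of_le hm' h2)]

/-- mixed-radix value -/
def mrVal (b r : ℕ → ℕ) (K : ℕ) : ℕ := ∑ j ∈ range K, r j * ∏ i ∈ range j, b i

lemma mrVal_succ (b r : ℕ → ℕ) (K : ℕ) :
    mrVal b r (K + 1) = r 0 + b 0 * mrVal (fun i => b (i+1)) (fun i => r (i+1)) K := by
  unfold mrVal
  rw [Finset.sum_range_succ']
  simp only [Finset.range_zero, Finset.prod_empty, mul_one]
  rw [Finset.mul_sum, add_comm]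
  congr 1
  refine Finset.sum_congr rfl fun j _ => ?_
  rw [Finset.prod_range_succ']
  ring

lemma mrVal_lt {b r : ℕ → ℕ} {K : ℕ} (hr : ∀ j < K, r j < b j) :
    mrVal b r K < ∏ j ∈ range K, b j := by
  induction K generalizing b r with
  | zero => simp [mrVal]
  | succ K ih =>
    rw [mrVal_succ, Finset.prod_range_succ']
    have h0 : r 0 < b 0 := hr 0 (Nat.succ_pos _)
    have hv : mrVal (fun i => b (i+1)) (fun i => r (i+1)) K < ∏ j ∈ range K, b (j+1) :=
      ih fun j hj => hr (j+1) (Nat.succ_lt_succ hj)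
    calc r 0 + b 0 * mrVal (fun i => b (i+1)) (fun i => r (i+1)) K
        < b 0 * (mrVal (fun i => b (i+1)) (fun i => r (i+1)) K + 1) := by
          rw [Nat.mul_add, mul_one]; omega
      _ ≤ b 0 * (∏ j ∈ range K, b (j+1)) := Nat.mul_le_mul_left _ hv
      _ = (∏ j ∈ range K, b (j+1)) * b 0 := Nat.mul_comm _ _

lemma mrVal_inj {b r r' : ℕ → ℕ} {K : ℕ} (hr : ∀ j < K, r j < b j)
    (hr' : ∀ j < K, r' j < b j) (h : mrVal b r K = mrVal b r' K) :
    ∀ j < K, r j = r' j := by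
  induction K generalizing b r r' with
  | zero => intro j hj; omega
  | succ K ih =>
    rw [mrVal_succ, mrVal_succ] at h
    have h0 : r 0 < b 0 := hr 0 (Nat.succ_pos _)
    have h0' : r' 0 < b 0 := hr' 0 (Nat.succ_pos _)
    have e0 : r 0 = r' 0 := by
      have := congrArg (· % b 0) h
      simpa [Nat.add_mul_mod_self_left, Nat.mod_eq_of_lt h0, Nat.mod_eq_of_lt h0'] using this
    have etail : mrVal (fun i => b (i+1)) (fun i => r (i+1)) K
        = mrVal (fun i => b (i+1)) (fun i => r' (i+1)) K := by
      rw [e0] at h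
      have := Nat.add_left_cancel h
      exact Nat.eq_of_mul_eq_mul_left (by omega) this
    have := ih (fun j hj => hr (j+1) (Nat.succ_lt_succ hj))
      (fun j hj => hr' (j+1) (Nat.succ_lt_succ hj)) etail
    intro j hj
    cases j with
    | zero => exact e0
    | succ j => exact this j (by omega)

/-- rank of an element in a finset -/
noncomputable def rk {α : Type*} [DecidableEq α] (t : Finset α) (a : α) : ℕ :=
  if h : a ∈ t then ((Fintype.equivFin t) ⟨a, h⟩ : Fin _).val else 0

lemma rk_lt {α : Type*} [DecidableEq α] {t : Finset α} {a : α} (h : a ∈ t) :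
    rk t a < t.card := by
  rw [rk, dif_pos h]
  have := ((Fintype.equivFin t) ⟨a, h⟩).isLt
  simpa [Fintype.card_coe] using this

lemma rk_inj {α : Type*} [DecidableEq α] {t : Finset α} {a a' : α} (h : a ∈ t) (h' : a' ∈ t)
    (he : rk t a = rk t a') : a = a' := by
  simp only [rk, dif_pos h, dif_pos h'] at he
  have := (Fintype.equivFin t).injective (Fin.val_injective he)
  exact Subtype.mk_eq_mk.1 this

/-- unary prefix lemma -/
lemma unary_prefix : ∀ (a b : ℕ) (l l' : List Bool),
    (List.replicate a true ++ false :: l) <+: (List.replicate b true ++ false :: l') →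
    a = b ∧ l <+: l' := by
  intro a
  induction a with
  | zero =>
    intro b l l' h
    cases b with
    | zero =>
      refine ⟨rfl, ?_⟩
      simpa [List.cons_prefix_cons] using h
    | succ b => simp [List.replicate_succ, List.cons_prefix_cons] at h
  | succ a ih =>
    intro b l l' h
    cases b with
    | zero => simp [List.replicate_succ, List.cons_prefix_cons] at h
    | succ b =>
      simp only [List.replicate_succ, List.cons_append, List.cons_prefix_cons] at h
      obtain ⟨heq, hl⟩ := ih b l l' h.2
      exact ⟨by omega, hl⟩

lemma prefix_split {x x' t t' : List Bool} (hl : x.length = x'.length)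
    (h : x ++ t <+: x' ++ t') : x = x' ∧ t <+: t' := by
  have hx : x <+: x' ++ t' := (List.prefix_append x t).trans h
  have hxe : x = x' := by
    obtain ⟨u, hu⟩ := hx
    have h1 : List.take x'.length (x ++ u) = x' := by rw [hu, List.take_left]
    have h2 : List.take x'.length (x ++ u) = x := by rw [← hl, List.take_left]
    exact h2.symm.trans h1
  subst hxe
  exact ⟨rfl, (List.prefix_append_right_inj x).1 h⟩

lemma clog_le_logb (m : ℕ) (hm : 1 ≤ m) :
    (Nat.clog 2 m : ℝ) ≤ Real.logb 2 m + 1 := by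
  rcases eq_or_lt_of_le hm with h1 | h2
  · simp [← h1]
  · have hc : 1 ≤ Nat.clog 2 m := Nat.clog_pos (b := 2) (by norm_num) h2
    have hp : (2 : ℕ) ^ (Nat.clog 2 m - 1) < m := by
      have := Nat.pow_pred_clog_lt_self (b := 2) (by norm_num) h2
      simpa [Nat.pred_eq_sub_one] using this
    have hple : ((2:ℝ)) ^ (Nat.clog 2 m - 1 : ℕ) ≤ (m : ℝ) := by
      exact_mod_cast hp.le
    have hlog : ((Nat.clog 2 m - 1 : ℕ) : ℝ) ≤ Real.logb 2 m := by
      calc ((Nat.clog 2 m - 1 : ℕ) : ℝ) = Real.logb 2 ((2:ℝ) ^ (Nat.clog 2 m - 1 : ℕ)) := by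
            rw [Real.logb_pow]
            simp [Real.logb_self_eq_one]
        _ ≤ Real.logb 2 m := by
            apply Real.logb_le_logb_of_le (by norm_num) (by positivity) hple
    have : ((Nat.clog 2 m - 1 : ℕ) : ℝ) = (Nat.clog 2 m : ℝ) - 1 := by
      have := hc; push_cast [Nat.cast_sub hc]; ring
    linarith [hlog, this.symm.le]


variable {n : ℕ}

def Kk (y : Fin n → ℕ) : ℕ := 1 + Finset.univ.sup y
def fib (y : Fin n → ℕ) (j : ℕ) : Finset (Fin n) := univ.filter (fun i => y i = j)
def phi (y : Fin n → ℕ) (j : ℕ) : ℕ := (fib y j).card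
def ss (y : Fin n → ℕ) (j : ℕ) : Finset (Fin n) := univ.filter (fun i => j ≤ y i)
def Cc (y : Fin n → ℕ) (j : ℕ) : ℕ := ((ss y j).card).choose (phi y j)
noncomputable def rnk (y : Fin n → ℕ) (j : ℕ) : ℕ :=
  rk (powersetCard (phi y j) (ss y j)) (fib y j)
noncomputable def Rv (y : Fin n → ℕ) : ℕ := mrVal (Cc y) (rnk y) (Kk y)
def Phi (y : Fin n → ℕ) : ℕ := mrVal (fun _ => n + 1) (phi y) (Kk y)
def Wf (n K : ℕ) (φ : ℕ → ℕ) : ℕ :=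
  Nat.clog 2 (∏ j ∈ range K, (n - ∑ i ∈ range j, φ i).choose (φ j))
noncomputable def Wv (y : Fin n → ℕ) : ℕ := Wf n (Kk y) (phi y)
noncomputable def enc (y : Fin n → ℕ) : List Bool :=
  List.replicate (Kk y) true ++
    false :: (toBits (Kk y * Nat.clog 2 (n + 1)) (Phi y) ++ toBits (Wv y) (Rv y))

lemma y_lt_K (y : Fin n → ℕ) (i : Fin n) : y i < Kk y := by
  have := Finset.le_sup (f := y) (mem_univ i)
  unfold Kk; omega

lemma fib_subset_ss (y : Fin n → ℕ) (j : ℕ) : fib y j ⊆ ss y j := by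
  intro i hi
  simp only [fib, mem_filter, mem_univ, true_and] at hi
  simp only [ss, mem_filter, mem_univ, true_and]
  omega

lemma mem_pows (y : Fin n → ℕ) (j : ℕ) :
    fib y j ∈ powersetCard (phi y j) (ss y j) :=
  Finset.mem_powersetCard.2 ⟨fib_subset_ss y j, rfl⟩

lemma rnk_lt (y : Fin n → ℕ) (j : ℕ) : rnk y j < Cc y j := by
  have := rk_lt (mem_pows y j)
  rwa [Finset.card_powersetCard] at this

lemma Cc_pos (y : Fin n → ℕ) (j : ℕ) : 0 < Cc y j :=
  Nat.choose_pos (Finset.card_le_card (fib_subset_ss y j))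

lemma ss_zero (y : Fin n → ℕ) : ss y 0 = univ := by
  simp [ss]

lemma ss_succ (y : Fin n → ℕ) (j : ℕ) : ss y (j + 1) = ss y j \ fib y j := by
  ext i
  simp only [ss, fib, mem_sdiff, mem_filter, mem_univ, true_and]
  omega

lemma card_ss_succ (y : Fin n → ℕ) (j : ℕ) :
    (ss y (j + 1)).card = (ss y j).card - phi y j := by
  rw [ss_succ, Finset.card_sdiff_of_subset (fib_subset_ss y j)]; rfl

lemma phi_le_card_ss (y : Fin n → ℕ) (j : ℕ) : phi y j ≤ (ss y j).card :=
  Finset.card_le_card (fib_subset_ss y j)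

lemma card_ss (y : Fin n → ℕ) (j : ℕ) :
    (ss y j).card = n - ∑ i ∈ range j, phi y i := by
  induction j with
  | zero => simp [ss_zero]
  | succ j ih =>
    rw [card_ss_succ, ih, Finset.sum_range_succ, Nat.sub_sub]

lemma ss_K (y : Fin n → ℕ) : ss y (Kk y) = ∅ := by
  apply Finset.eq_empty_of_forall_notMem
  intro i
  simp only [ss, mem_filter, mem_univ, true_and]
  have := y_lt_K y i
  omega

lemma key_count (y : Fin n → ℕ) (t : ℕ) :
    (∏ j ∈ range t, Cc y j) * (∏ j ∈ range t, (phi y j).factorial) *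
      ((ss y t).card).factorial = n.factorial := by
  induction t with
  | zero =>
    simp [ss_zero]
  | succ t ih =>
    rw [Finset.prod_range_succ, Finset.prod_range_succ]
    have hle := phi_le_card_ss y t
    have h1 : Cc y t * (phi y t).factorial * ((ss y (t+1)).card).factorial
        = ((ss y t).card).factorial := by
      rw [card_ss_succ]
      exact Nat.choose_mul_factorial_mul_factorial hle
    calc (∏ j ∈ range t, Cc y j) * Cc y t * ((∏ j ∈ range t, (phi y j).factorial) *
            (phi y t).factorial) * ((ss y (t+1)).card).factorial
        = (∏ j ∈ range t, Cc y j) * (∏ j ∈ range t, (phi y j).factorial) *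
            (Cc y t * (phi y t).factorial * ((ss y (t+1)).card).factorial) := by ring
      _ = n.factorial := by rw [h1, ih]

lemma Mp_mul_fact (y : Fin n → ℕ) :
    (∏ j ∈ range (Kk y), Cc y j) * (∏ j ∈ range (Kk y), (phi y j).factorial)
      = n.factorial := by
  have := key_count y (Kk y)
  rwa [ss_K, Finset.card_empty, Nat.factorial_zero, mul_one] at this

lemma Wv_eq (y : Fin n → ℕ) : Wv y = Nat.clog 2 (∏ j ∈ range (Kk y), Cc y j) := by
  unfold Wv Wf
  congr 1
  refine Finset.prod_congr rfl fun j _ => ?_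
  rw [← card_ss]; rfl

lemma Rv_lt_pow (y : Fin n → ℕ) : Rv y < 2 ^ Wv y := by
  have h1 : Rv y < ∏ j ∈ range (Kk y), Cc y j := mrVal_lt fun j _ => rnk_lt y j
  have h2 := Nat.le_pow_clog (b := 2) (by norm_num) (∏ j ∈ range (Kk y), Cc y j)
  rw [Wv_eq]
  omega

lemma phi_le (y : Fin n → ℕ) (j : ℕ) : phi y j ≤ n := by
  have := Finset.card_le_card (Finset.subset_univ (fib y j))
  simpa [phi] using this

lemma Phi_lt_pow (y : Fin n → ℕ) : Phi y < 2 ^ (Kk y * Nat.clog 2 (n + 1)) := by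
  have h1 : Phi y < ∏ _j ∈ range (Kk y), (n + 1) :=
    mrVal_lt fun j _ => Nat.lt_succ_of_le (phi_le y j)
  have h2 : (n + 1) ≤ 2 ^ Nat.clog 2 (n + 1) := Nat.le_pow_clog (by norm_num) _
  calc Phi y < ∏ _j ∈ range (Kk y), (n + 1) := h1
    _ = (n + 1) ^ Kk y := by rw [Finset.prod_const, Finset.card_range]
    _ ≤ (2 ^ Nat.clog 2 (n + 1)) ^ Kk y := Nat.pow_le_pow_left h2 _
    _ = 2 ^ (Kk y * Nat.clog 2 (n + 1)) := by rw [← Nat.pow_mul, Nat.mul_comm]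

lemma enc_prefix_eq {y y' : Fin n → ℕ} (h : enc y <+: enc y') : y = y' := by
  unfold enc at h
  obtain ⟨hK, h2⟩ := unary_prefix _ _ _ _ h
  -- split off the Phi blocks
  have hlen : (toBits (Kk y * Nat.clog 2 (n + 1)) (Phi y)).length
      = (toBits (Kk y' * Nat.clog 2 (n + 1)) (Phi y')).length := by
    rw [toBits_length, toBits_length, hK]
  obtain ⟨hA, hB⟩ := prefix_split hlen h2
  rw [← hK] at hA
  have hPhi : Phi y = Phi y' := by
    refine toBits_inj (Phi_lt_pow y) (w := Kk y * Nat.clog 2 (n + 1)) ?_ hA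
    rw [hK]; exact Phi_lt_pow y'
  have hphi : ∀ j < Kk y, phi y j = phi y' j := by
    have hPhi' : mrVal (fun _ => n + 1) (phi y) (Kk y)
        = mrVal (fun _ => n + 1) (phi y') (Kk y) := by
      have h0 := hPhi
      unfold Phi at h0
      rw [← hK] at h0
      exact h0
    exact mrVal_inj (fun j _ => Nat.lt_succ_of_le (phi_le y j))
      (fun j _ => Nat.lt_succ_of_le (phi_le y' j)) hPhi'
  have hW : Wv y = Wv y' := by
    unfold Wv Wf
    rw [hK]
    congr 1
    refine Finset.prod_congr rfl fun j hj => ?_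
    have hj' : j < Kk y := by rw [hK]; exact mem_range.1 hj
    rw [hphi j hj']
    congr 2
    refine Finset.sum_congr rfl fun i hi => ?_
    exact hphi i (lt_trans (mem_range.1 hi) hj')
  have hBeq : toBits (Wv y) (Rv y) = toBits (Wv y') (Rv y') :=
    hB.eq_of_length (by rw [toBits_length, toBits_length, hW])
  have hRv : Rv y = Rv y' := by
    apply toBits_inj (Rv_lt_pow y) (w := Wv y)
    · rw [hW]; exact Rv_lt_pow y'
    · rw [hW] at hBeq ⊢; exact hBeq
  have hCc : ∀ j < Kk y, Cc y j = Cc y' j := by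
    intro j hj
    unfold Cc
    rw [card_ss, card_ss, hphi j hj]
    congr 2
    refine Finset.sum_congr rfl fun i hi => ?_
    exact hphi i (lt_trans (mem_range.1 hi) hj)
  have hrnk : ∀ j < Kk y, rnk y j = rnk y' j := by
    have h0 := hRv
    unfold Rv at h0
    rw [← hK] at h0
    have hRv' : mrVal (Cc y) (rnk y) (Kk y) = mrVal (Cc y) (rnk y') (Kk y) := by
      rw [h0]
      unfold mrVal
      refine Finset.sum_congr rfl fun j hj => ?_
      congr 1
      refine Finset.prod_congr rfl fun i hi => ?_
      exact (hCc i (lt_trans (mem_range.1 hi) (mem_range.1 hj))).symm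
    exact mrVal_inj (fun j _ => rnk_lt y j)
      (fun j hj => by rw [hCc j hj]; exact rnk_lt y' j) hRv'
  -- fibers are equal, by strong induction
  have hfib : ∀ j, j < Kk y → fib y j = fib y' j := by
    intro j
    induction j using Nat.strong_induction_on with
    | _ j ih =>
      intro hj
      have hss : ss y j = ss y' j := by
        ext i
        simp only [ss, mem_filter, mem_univ, true_and]
        constructor
        · intro hji
          by_contra hcon
          push_neg at hcon
          have hmem : i ∈ fib y' (y' i) := by simp [fib]
          have hfe : fib y (y' i) = fib y' (y' i) :=
            ih (y' i) hcon (hcon.trans hj)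
          rw [← hfe] at hmem
          simp only [fib, mem_filter, mem_univ, true_and] at hmem
          omega
        · intro hji
          by_contra hcon
          push_neg at hcon
          have hmem : i ∈ fib y (y i) := by simp [fib]
          have hfe : fib y (y i) = fib y' (y i) := ih (y i) (by omega) (by omega)
          rw [hfe] at hmem
          simp only [fib, mem_filter, mem_univ, true_and] at hmem
          omega
      have hmem' : fib y' j ∈ powersetCard (phi y j) (ss y j) := by
        rw [hphi j hj, hss]
        exact mem_pows y' j
      apply rk_inj (mem_pows y j) hmem'
      have : rnk y' j = rk (powersetCard (phi y j) (ss y j)) (fib y' j) := by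
        rw [rnk, hphi j hj, hss]
      rw [← this]
      exact hrnk j hj
  funext i
  have h1 : i ∈ fib y (y i) := by simp [fib]
  rw [hfib (y i) (y_lt_K y i)] at h1
  simp only [fib, mem_filter, mem_univ, true_and] at h1
  exact h1.symm

end SeqEnc

open SeqEnc in
/-- There is an absolute constant `C > 0` such that for every `n ≥ 1` there is an
injective, prefix-free encoding of sequences `y : Fin n → ℕ` into nonempty binary
strings whose length is at most
`log₂(1 + ⌈n! / ∏_{j<K} φⱼ!⌉) + C·K·log₂(n+1)`, where `K = 1 + max yᵢ` and
`φⱼ` is the number of indices `i` with `yᵢ = j`. -/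
theorem sequence_encoding_exists :
    ∃ C : ℝ, 0 < C ∧
      ∀ n : ℕ, 1 ≤ n →
        ∃ enc : (Fin n → ℕ) → List Bool,
          Function.Injective enc ∧
          (∀ y, enc y ≠ []) ∧
          (∀ y y' : Fin n → ℕ, y ≠ y' → ¬ (enc y <+: enc y')) ∧
          (∀ y : Fin n → ℕ,
            ((enc y).length : ℝ) ≤
              Real.logb 2 (1 +
                (⌈(n.factorial : ℚ) /
                    ∏ j ∈ Finset.range (1 + Finset.univ.sup y),
                      (((Finset.univ.filter (fun i => y i = j)).card).factorial : ℚ)⌉ : ℤ)) +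
              C * (1 + Finset.univ.sup y) * Real.logb 2 (n + 1)) := by
  refine ⟨5, by norm_num, ?_⟩
  intro n hn
  refine ⟨SeqEnc.enc, ?_, ?_, ?_, ?_⟩
  · intro y y' he
    have hp : SeqEnc.enc y <+: SeqEnc.enc y' := by rw [he]
    exact enc_prefix_eq hp
  · intro y
    simp [SeqEnc.enc]
  · intro y y' hne hp
    exact hne (enc_prefix_eq hp)
  · intro y
    have hlen : (SeqEnc.enc y).length
        = Kk y + 1 + (Kk y * Nat.clog 2 (n + 1) + Wv y) := by
      unfold SeqEnc.enc
      rw [List.length_append, List.length_replicate, List.length_cons, List.length_append,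
        toBits_length, toBits_length]
      omega
    set M := ∏ j ∈ range (Kk y), Cc y j with hMdef
    have hM1 : 0 < M := Finset.prod_pos fun j _ => Cc_pos y j
    have hPne : (∏ j ∈ Finset.range (1 + Finset.univ.sup y),
        (((Finset.univ.filter (fun i => y i = j)).card).factorial : ℚ)) ≠ 0 :=
      Finset.prod_ne_zero_iff.2 fun j _ => by
        exact_mod_cast (Nat.factorial_pos _).ne'
    have hcastP : (∏ j ∈ Finset.range (1 + Finset.univ.sup y),
        (((Finset.univ.filter (fun i => y i = j)).card).factorial : ℚ))
        = ((∏ j ∈ range (Kk y), (phi y j).factorial : ℕ) : ℚ) := by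
      push_cast
      rfl
    have hfacQ : (n.factorial : ℚ) = (M : ℚ) * ∏ j ∈ Finset.range (1 + Finset.univ.sup y),
        (((Finset.univ.filter (fun i => y i = j)).card).factorial : ℚ) := by
      rw [hcastP, ← Nat.cast_mul, Mp_mul_fact y]
    have hdiv : (n.factorial : ℚ) / ∏ j ∈ Finset.range (1 + Finset.univ.sup y),
        (((Finset.univ.filter (fun i => y i = j)).card).factorial : ℚ) = (M : ℚ) := by
      rw [hfacQ, mul_div_assoc, div_self hPne, mul_one]
    rw [hdiv, Int.ceil_natCast, hlen]
    have hMR : (0 : ℝ) < (M : ℝ) := by exact_mod_cast hM1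
    have hWb : (Wv y : ℝ) ≤ Real.logb 2 (1 + (M : ℝ)) + 1 := by
      rw [Wv_eq, ← hMdef]
      have h1 := clog_le_logb M hM1
      have h2 : Real.logb 2 (M : ℝ) ≤ Real.logb 2 (1 + (M : ℝ)) :=
        Real.logb_le_logb_of_le (by norm_num) hMR (by linarith)
      linarith
    have hLb : ((Nat.clog 2 (n + 1) : ℕ) : ℝ) ≤ Real.logb 2 ((n : ℝ) + 1) + 1 := by
      have := clog_le_logb (n + 1) (by omega)
      push_cast at this
      exact this
    have hlg1 : 1 ≤ Real.logb 2 ((n : ℝ) + 1) := by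
      have h2 : (2 : ℝ) ≤ (n : ℝ) + 1 := by
        have : (1 : ℝ) ≤ (n : ℝ) := by exact_mod_cast hn
        linarith
      calc (1 : ℝ) = Real.logb 2 2 := (Real.logb_self_eq_one (by norm_num)).symm
        _ ≤ _ := Real.logb_le_logb_of_le (by norm_num) (by norm_num) h2
    have hK1 : (1 : ℝ) ≤ (Kk y : ℝ) := by
      have : 1 ≤ Kk y := by unfold Kk; omega
      exact_mod_cast this
    have hKcast : ((Kk y : ℕ) : ℝ) = 1 + ((Finset.univ.sup y : ℕ) : ℝ) := by
      unfold Kk; push_cast; ring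
    have hKL : (Kk y : ℝ) * ((Nat.clog 2 (n + 1) : ℕ) : ℝ)
        ≤ (Kk y : ℝ) * (Real.logb 2 ((n : ℝ) + 1) + 1) :=
      mul_le_mul_of_nonneg_left hLb (by linarith)
    have hKlg : (Kk y : ℝ) ≤ (Kk y : ℝ) * Real.logb 2 ((n : ℝ) + 1) := by
      nlinarith
    push_cast
    rw [← hKcast]
    nlinarith [hWb, hKL, hKlg, hK1, hlg1]
end
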